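/- arXiv:2601.02243 — 4 statements merged into one kernel-verified Lean document; each statement's English description precedes it below -/
import Mathlib

section
/- Assume π⁻ ≤ α_r·πʷ ≤ π⁺. Define the optimal dispatch functions w_h*(g) := w_h^IM if g < Γ_IM; clamp(η_h·(w̲_r/α_r − g), w̲_h, w̄_h) if Γ_IM ≤ g < Γ_NZ1; w_h^NZ if Γ_NZ1 ≤ g ≤ Γ_NZ2; clamp(η_h·(w̄_r/α_r − g), w̲_h, w̄_h) if Γ_NZ2 < g ≤ Γ_EX; w_h^EX if g > Γ_EX; and w_r*(g) := w̲_r if g < Γ_NZ1; α_r·(w_h^NZ/η_h + g) if Γ_NZ1 ≤ g ≤ Γ_NZ2; w̄_r if g > Γ_NZ2. Then the net exchange z*(g) := w_r*(g)/α_r − w_h*(g)/η_h − g satisfies: z*(g) > 0 for g < Γ_IM, z*(g) = 0 for Γ_IM ≤ g ≤ Γ_EX, and z*(g) < 0 for g > Γ_EX. -/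
/-!
Raising the grid price δ raises the marginal value of TDP water, so the maximizer `W δ` is
monotone in δ; hence `Γ_IM ≤ Γ_NZ1 ≤ Γ_NZ2 ≤ Γ_EX`. On the two clamped regimes the clamp is
inactive, because `η_h (w̲_r/α_r - g)` (resp. `η_h (w̄_r/α_r - g)`) lies between two values of `W`,
so the TDP and RODP outputs balance the renewable generation exactly throughout `[Γ_IM, Γ_EX]`.
Outside it both outputs sit at their `W`-values and the sign of `z*` is that of the distance to
the nearest threshold.
-/

open Set

noncomputable section

/-- Net electricity exchange. -/
def netz (αr ηh wh wr g : ℝ) : ℝ := wr / αr - wh / ηh - g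

/-- Electricity payment under net metering. -/
def epay (πp πm π0 αr ηh wh wr g : ℝ) : ℝ :=
  πp * max (netz αr ηh wh wr g) 0 + πm * min (netz αr ηh wh wr g) 0 + π0

/-- WDP profit. -/
def profit (πw πp πm π0 αr αh ηh : ℝ) (C : ℝ → ℝ) (wh wr g : ℝ) : ℝ :=
  πw * (wh + wr) - epay πp πm π0 αr ηh wh wr g - C (wh / αh)

/-- clamp(x, a, b) = max(a, min(x, b)). -/
def clampR (x a b : ℝ) : ℝ := max a (min x b)

/-- Value function: sup of profit over the feasible rectangle. -/
def Pstar (πw πp πm π0 αr αh ηh : ℝ) (C : ℝ → ℝ) (wlh wuh wlr wur g : ℝ) : ℝ :=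
  sSup ((fun p : ℝ × ℝ => profit πw πp πm π0 αr αh ηh C p.1 p.2 g) ''
    (Icc wlh wuh ×ˢ Icc wlr wur))

/-- Monotone comparative statics: adding the inequalities `a x - f x ≥ a y - f y` and
`b y - f y ≥ b x - f x` gives `(b - a) (y - x) ≥ 0`. -/
theorem le_of_isMaxOn_mul_sub {f : ℝ → ℝ} {S : Set ℝ} {a b x y : ℝ} (hab : a < b)
    (hx : x ∈ S) (hy : y ∈ S)
    (hxmax : IsMaxOn (fun w => a * w - f w) S x) (hymax : IsMaxOn (fun w => b * w - f w) S y) :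
    x ≤ y := by
  have hxy := isMaxOn_iff.1 hxmax y hy
  have hyx := isMaxOn_iff.1 hymax x hx
  have hprod : 0 ≤ (b - a) * (y - x) := by linarith
  exact sub_nonneg.1 (nonneg_of_mul_nonneg_right hprod (sub_pos.2 hab))

theorem monotone_of_isMaxOn_mul_sub {f φ x : ℝ → ℝ} {S : Set ℝ} (hφ : StrictMono φ)
    (hS : ∀ δ, x δ ∈ S) (hmax : ∀ δ, IsMaxOn (fun w => φ δ * w - f w) S (x δ)) :
    Monotone x := by
  intro δ₁ δ₂ h
  rcases h.eq_or_lt with rfl | h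
  · exact le_rfl
  · exact le_of_isMaxOn_mul_sub (hφ h) (hS δ₁) (hS δ₂) (hmax δ₁) (hmax δ₂)

theorem clampR_div_of_le {η t lo hi : ℝ} (hη : 0 < η) (hlo : lo ≤ η * t) (hhi : η * t ≤ hi) :
    clampR (η * t) lo hi / η = t := by
  rw [clampR, min_eq_left hhi, max_eq_right hlo, mul_div_cancel_left₀ _ hη.ne']

theorem optimal_grid_exchange_general
    (πp πm πw αh ηh αr wlh wuh wlr wur : ℝ) (C : ℝ → ℝ)
    (hηh : 0 < ηh) (hαr : 0 < αr)
    (hwrb : wlr ≤ wur)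
    (Wfun : ℝ → ℝ)
    (hWfun : ∀ δ : ℝ, Wfun δ ∈ Icc wlh wuh ∧
      ∀ w ∈ Icc wlh wuh,
        (πw + δ / ηh) * w - C (w / αh) ≤ (πw + δ / ηh) * Wfun δ - C (Wfun δ / αh))
    (hmid1 : πm ≤ αr * πw) (hmid2 : αr * πw ≤ πp) :
    ∀ g : ℝ,
      (fun zs =>
        (g < wlr / αr - Wfun πp / ηh → 0 < zs) ∧
        (wlr / αr - Wfun πp / ηh ≤ g → g ≤ wur / αr - Wfun πm / ηh → zs = 0) ∧
        (wur / αr - Wfun πm / ηh < g → zs < 0))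
      ((if g < wlr / αr - Wfun (αr * πw) / ηh then wlr
        else if g ≤ wur / αr - Wfun (αr * πw) / ηh then αr * (Wfun (αr * πw) / ηh + g)
        else wur) / αr -
       (if g < wlr / αr - Wfun πp / ηh then Wfun πp
        else if g < wlr / αr - Wfun (αr * πw) / ηh then clampR (ηh * (wlr / αr - g)) wlh wuh
        else if g ≤ wur / αr - Wfun (αr * πw) / ηh then Wfun (αr * πw)
        else if g ≤ wur / αr - Wfun πm / ηh then clampR (ηh * (wur / αr - g)) wlh wuh
        else Wfun πm) / ηh - g) := by
  have hW : Monotone Wfun :=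
    monotone_of_isMaxOn_mul_sub (φ := fun δ => πw + δ / ηh) (fun _ _ h => by dsimp only; gcongr)
      (fun δ => (hWfun δ).1) (fun δ => isMaxOn_iff.2 (hWfun δ).2)
  obtain ⟨hp_lo, hp_hi⟩ := (hWfun πp).1
  obtain ⟨hm_lo, hm_hi⟩ := (hWfun πm).1
  have hnp : Wfun (αr * πw) / ηh ≤ Wfun πp / ηh := by gcongr; exact hW hmid2
  have hmn : Wfun πm / ηh ≤ Wfun (αr * πw) / ηh := by gcongr; exact hW hmid1
  have hwr : wlr / αr ≤ wur / αr := by gcongr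
  have hp : ηh * (Wfun πp / ηh) = Wfun πp := mul_div_cancel₀ _ hηh.ne'
  have hm : ηh * (Wfun πm / ηh) = Wfun πm := mul_div_cancel₀ _ hηh.ne'
  intro g
  refine ⟨fun hg => ?_, fun hg hg' => ?_, fun hg => ?_⟩
  · rw [if_pos (by linarith), if_pos hg]
    linarith
  · split_ifs <;> try linarith
    · rw [clampR_div_of_le hηh (by nlinarith) (by nlinarith)]
      ring
    · rw [mul_div_cancel_left₀ _ hαr.ne']
      ring
    · rw [clampR_div_of_le hηh (by nlinarith) (by nlinarith)]
      ring
  · rw [if_neg (by linarith), if_neg (by linarith), if_neg (by linarith), if_neg (by linarith),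
      if_neg (by linarith), if_neg (by linarith)]
    linarith

/-- sign of the optimal net exchange z*(g) across the three modes. -/
theorem optimal_grid_exchange
    (πp πm π0 πw αh ηh αr wlh wuh wlr wur : ℝ) (C : ℝ → ℝ)
    (hπ : πm ≤ πp) (hπm : 0 ≤ πm) (hπw : 0 ≤ πw)
    (hαh : 0 < αh) (hηh : 0 < ηh) (hαr : 0 < αr)
    (hwlh : 0 ≤ wlh) (hwhb : wlh ≤ wuh) (hwlr : 0 ≤ wlr) (hwrb : wlr ≤ wur)
    (hC : StrictConvexOn ℝ univ C) (hCd : Differentiable ℝ C) (hCm : Monotone C)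
    (Wfun : ℝ → ℝ)
    (hWfun : ∀ δ : ℝ, Wfun δ ∈ Icc wlh wuh ∧
      ∀ w ∈ Icc wlh wuh,
        (πw + δ / ηh) * w - C (w / αh) ≤ (πw + δ / ηh) * Wfun δ - C (Wfun δ / αh))
    (hmid1 : πm ≤ αr * πw) (hmid2 : αr * πw ≤ πp) :
    ∀ g : ℝ,
      (fun zs =>
        (g < wlr / αr - Wfun πp / ηh → 0 < zs) ∧
        (wlr / αr - Wfun πp / ηh ≤ g → g ≤ wur / αr - Wfun πm / ηh → zs = 0) ∧
        (wur / αr - Wfun πm / ηh < g → zs < 0))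
      ((if g < wlr / αr - Wfun (αr * πw) / ηh then wlr
        else if g ≤ wur / αr - Wfun (αr * πw) / ηh then αr * (Wfun (αr * πw) / ηh + g)
        else wur) / αr -
       (if g < wlr / αr - Wfun πp / ηh then Wfun πp
        else if g < wlr / αr - Wfun (αr * πw) / ηh then clampR (ηh * (wlr / αr - g)) wlh wuh
        else if g ≤ wur / αr - Wfun (αr * πw) / ηh then Wfun (αr * πw)
        else if g ≤ wur / αr - Wfun πm / ηh then clampR (ηh * (wur / αr - g)) wlh wuh
        else Wfun πm) / ηh - g) :=
  optimal_grid_exchange_general πp πm πw αh ηh αr wlh wuh wlr wur C hηh hαr hwrb Wfun hWfun hmid1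
    hmid2
end
end

section
/- Assume α_r·πʷ > π⁺ (hence also α_r·πʷ > π⁻). Define Γ_IM^s := w̄_r/α_r − w_h^IM/η_h and Γ_EX^s := w̄_r/α_r − w_h^EX/η_h, and set w_h^s(g) := w_h^IM if g < Γ_IM^s; clamp(η_h·(w̄_r/α_r − g), w̲_h, w̄_h) if Γ_IM^s ≤ g ≤ Γ_EX^s; w_h^EX if g > Γ_EX^s. Then for every g, the point (w_h^s(g), w̄_r) maximizes the profit over the feasible set: for all (w_h, w_r) ∈ F, Π(w_h, w_r, g) ≤ Π(w_h^s(g), w̄_r, g). -/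
/-!
Bill the electricity at a single flat price `δ ∈ [π⁻, π⁺]` instead of the two-part tariff. This
never lowers the profit, and it leaves it unchanged at `δ = π⁺` when the plant imports and at
`δ = π⁻` when it exports. Under a flat price the profit separates into a concave function of `w_h`,
maximized at `W(δ)`, plus a term in `w_r` with nonnegative coefficient `πʷ - δ/α_r`, so `w_r = w̄_r` is
optimal. Below `Γ_IM^s` the point `(W(π⁺), w̄_r)` imports and above `Γ_EX^s` the point
`(W(π⁻), w̄_r)` exports. In between, the point `w_h^s` with zero net exchange lies between `W(π⁻)`
and `W(π⁺)`, and concavity lets us compare it with `w_h` using `δ = π⁺` or `δ = π⁻`, depending on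
which side of `w_h^s` the point `w_h` lies.
-/

open Set

noncomputable section

lemma clampR_of_mem {x a b : ℝ} (hx : x ∈ Icc a b) : clampR x a b = x := by
  rw [clampR, min_eq_left hx.2, max_eq_right hx.1]

lemma ConcaveOn.le_of_mem_uIcc {f : ℝ → ℝ} (hf : ConcaveOn ℝ univ f) {x y m : ℝ}
    (hm : m ∈ uIcc x y) (h : f x ≤ f y) : f x ≤ f m := by
  simpa [min_eq_left h] using
    hf.ge_on_segment (mem_univ x) (mem_univ y) (segment_eq_uIcc x y ▸ hm)

lemma concaveOn_linear_sub_comp_div {C : ℝ → ℝ} (hC : ConvexOn ℝ univ C) (c αh : ℝ) :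
    ConcaveOn ℝ univ (fun w : ℝ => c * w - C (w / αh)) := by
  have h := (LinearMap.concaveOn (c • LinearMap.id) convex_univ).sub
    (hC.comp_linearMap (αh⁻¹ • LinearMap.id))
  refine h.congr fun w _ => ?_
  simp [div_eq_inv_mul]

section

variable {αr ηh wh wr g : ℝ}

lemma netz_nonneg_iff (hηh : 0 < ηh) : 0 ≤ netz αr ηh wh wr g ↔ wh ≤ ηh * (wr / αr - g) := by
  rw [netz, sub_right_comm, sub_nonneg, div_le_iff₀' hηh]

lemma netz_nonpos_iff (hηh : 0 < ηh) : netz αr ηh wh wr g ≤ 0 ↔ ηh * (wr / αr - g) ≤ wh := by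
  rw [netz, sub_right_comm, sub_nonpos, le_div_iff₀' hηh]

lemma netz_eq_zero (hηh : ηh ≠ 0) : netz αr ηh (ηh * (wr / αr - g)) wr g = 0 := by
  rw [netz, mul_div_cancel_left₀ _ hηh]
  ring

end

section

variable {πw πp πm π0 αr αh ηh δ : ℝ} {C : ℝ → ℝ} {wh wr g : ℝ}

lemma profit_flat_eq :
    profit πw δ δ π0 αr αh ηh C wh wr g =
      ((πw + δ / ηh) * wh - C (wh / αh)) + (πw - δ / αr) * wr + δ * g - π0 := by
  rw [profit, epay, ← mul_add, max_add_min, add_zero, netz]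
  ring

lemma profit_le_profit_flat (hδm : πm ≤ δ) (hδp : δ ≤ πp) :
    profit πw πp πm π0 αr αh ηh C wh wr g ≤ profit πw δ δ π0 αr αh ηh C wh wr g := by
  have hmax := mul_le_mul_of_nonneg_right hδp (le_max_right (netz αr ηh wh wr g) 0)
  have hmin := mul_le_mul_of_nonpos_right hδm (min_le_right (netz αr ηh wh wr g) 0)
  simp only [profit, epay]
  linarith

lemma profit_eq_profit_flat_of_netz_nonneg (hz : 0 ≤ netz αr ηh wh wr g) :
    profit πw πp πm π0 αr αh ηh C wh wr g = profit πw πp πp π0 αr αh ηh C wh wr g := by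
  simp only [profit, epay, min_eq_right hz, mul_zero]

lemma profit_eq_profit_flat_of_netz_nonpos (hz : netz αr ηh wh wr g ≤ 0) :
    profit πw πp πm π0 αr αh ηh C wh wr g = profit πw πm πm π0 αr αh ηh C wh wr g := by
  simp only [profit, epay, max_eq_right hz, mul_zero]

lemma profit_le_of_flat {ws wur : ℝ} (hαr : 0 < αr) (hδw : δ ≤ αr * πw)
    (hδm : πm ≤ δ) (hδp : δ ≤ πp)
    (hobj : (πw + δ / ηh) * wh - C (wh / αh) ≤ (πw + δ / ηh) * ws - C (ws / αh))
    (hwr : wr ≤ wur)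
    (hexact : profit πw πp πm π0 αr αh ηh C ws wur g = profit πw δ δ π0 αr αh ηh C ws wur g) :
    profit πw πp πm π0 αr αh ηh C wh wr g ≤ profit πw πp πm π0 αr αh ηh C ws wur g := by
  have hcoef : 0 ≤ πw - δ / αr := sub_nonneg.2 ((div_le_iff₀ hαr).2 (by linarith))
  calc profit πw πp πm π0 αr αh ηh C wh wr g
      ≤ profit πw δ δ π0 αr αh ηh C wh wr g := profit_le_profit_flat hδm hδp
    _ ≤ profit πw δ δ π0 αr αh ηh C ws wur g := by
      rw [profit_flat_eq, profit_flat_eq]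
      linarith [mul_le_mul_of_nonneg_left hwr hcoef]
    _ = profit πw πp πm π0 αr αh ηh C ws wur g := hexact.symm

end

theorem special_tariff_high_water_price_general
    (πp πm π0 πw αh ηh αr wlh wuh wlr wur : ℝ) (C : ℝ → ℝ)
    (hπ : πm ≤ πp)
    (hηh : 0 < ηh) (hαr : 0 < αr)
    (hC : StrictConvexOn ℝ univ C)
    (Wfun : ℝ → ℝ)
    (hWfun : ∀ δ : ℝ, Wfun δ ∈ Icc wlh wuh ∧
      ∀ w ∈ Icc wlh wuh,
        (πw + δ / ηh) * w - C (w / αh) ≤ (πw + δ / ηh) * Wfun δ - C (Wfun δ / αh))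
    (hsp : πp < αr * πw) :
    ∀ g : ℝ,
      ∀ wh ∈ Icc wlh wuh, ∀ wr ∈ Icc wlr wur,
        profit πw πp πm π0 αr αh ηh C wh wr g ≤
          profit πw πp πm π0 αr αh ηh C
            (if g < wur / αr - Wfun πp / ηh then Wfun πp
             else if g ≤ wur / αr - Wfun πm / ηh then clampR (ηh * (wur / αr - g)) wlh wuh
             else Wfun πm) wur g := by
  intro g wh hwh wr hwr
  split_ifs with hIM hEX
  · exact profit_le_of_flat hαr hsp.le hπ le_rfl ((hWfun πp).2 wh hwh) hwr.2
      (profit_eq_profit_flat_of_netz_nonneg (by rw [netz]; linarith))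
  · set ws := ηh * (wur / αr - g)
    have hws_le : ws ≤ Wfun πp := (netz_nonpos_iff hηh).1 (by rw [netz]; linarith)
    have hle_ws : Wfun πm ≤ ws := (netz_nonneg_iff hηh).1 (by rw [netz]; linarith)
    have hz : netz αr ηh ws wur g = 0 := netz_eq_zero hηh.ne'
    rw [clampR_of_mem ⟨(hWfun πm).1.1.trans hle_ws, hws_le.trans (hWfun πp).1.2⟩]
    rcases le_total wh ws with hwh_le | hle_wh
    · refine profit_le_of_flat hαr hsp.le hπ le_rfl ?_ hwr.2 (profit_eq_profit_flat_of_netz_nonneg hz.ge)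
      exact (concaveOn_linear_sub_comp_div hC.convexOn _ αh).le_of_mem_uIcc
        (Icc_subset_uIcc ⟨hwh_le, hws_le⟩) ((hWfun πp).2 wh hwh)
    · refine profit_le_of_flat hαr (hπ.trans hsp.le) le_rfl hπ ?_ hwr.2 (profit_eq_profit_flat_of_netz_nonpos hz.le)
      exact (concaveOn_linear_sub_comp_div hC.convexOn _ αh).le_of_mem_uIcc
        (Icc_subset_uIcc' ⟨hle_ws, hle_wh⟩) ((hWfun πm).2 wh hwh)
  · exact profit_le_of_flat hαr (hπ.trans hsp.le) le_rfl hπ ((hWfun πm).2 wh hwh) hwr.2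
      (profit_eq_profit_flat_of_netz_nonpos (by rw [netz]; linarith))

/-- special tariff case α_r·πʷ > π⁺: RODP at maximum, TDP two-threshold. -/
theorem special_tariff_high_water_price
    (πp πm π0 πw αh ηh αr wlh wuh wlr wur : ℝ) (C : ℝ → ℝ)
    (hπ : πm ≤ πp) (hπm : 0 ≤ πm) (hπw : 0 ≤ πw)
    (hαh : 0 < αh) (hηh : 0 < ηh) (hαr : 0 < αr)
    (hwlh : 0 ≤ wlh) (hwhb : wlh ≤ wuh) (hwlr : 0 ≤ wlr) (hwrb : wlr ≤ wur)
    (hC : StrictConvexOn ℝ univ C) (hCd : Differentiable ℝ C) (hCm : Monotone C)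
    (Wfun : ℝ → ℝ)
    (hWfun : ∀ δ : ℝ, Wfun δ ∈ Icc wlh wuh ∧
      ∀ w ∈ Icc wlh wuh,
        (πw + δ / ηh) * w - C (w / αh) ≤ (πw + δ / ηh) * Wfun δ - C (Wfun δ / αh))
    (hsp : πp < αr * πw) :
    ∀ g : ℝ,
      ∀ wh ∈ Icc wlh wuh, ∀ wr ∈ Icc wlr wur,
        profit πw πp πm π0 αr αh ηh C wh wr g ≤
          profit πw πp πm π0 αr αh ηh C
            (if g < wur / αr - Wfun πp / ηh then Wfun πp
             else if g ≤ wur / αr - Wfun πm / ηh then clampR (ηh * (wur / αr - g)) wlh wuh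
             else Wfun πm) wur g :=
  special_tariff_high_water_price_general πp πm π0 πw αh ηh αr wlh wuh wlr wur C hπ hηh hαr hC Wfun
    hWfun hsp
end
end

section
/- Assume π⁻ ≤ α_r·πʷ ≤ π⁺. For all g₁ ≤ g₂ with g₂ < Γ_IM, the value function satisfies Π*(g₂) − Π*(g₁) = π⁺·(g₂ − g₁); in particular the maximum profit increases with renewable generation at rate π⁺ in the import region. -/
/-!
In the import region the optimum buys electricity at the marginal price `π⁺`: pricing the net
exchange linearly at `π⁺` bounds the payment from below (since `π⁻ ≤ π⁺`), and the resulting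
profit separates into a TDP part, maximized by `W(π⁺)`, a RODP part with slope
`πʷ - π⁺/α_r ≤ 0`, maximized at `w̲_r`, and the term `π⁺ g`. Below `Γ_IM` the maximizer
`(W(π⁺), w̲_r)` really imports, so the bound is attained and `Π*(g)` is affine in `g` with slope `π⁺`.
-/

open Set

noncomputable section

lemma mul_le_mul_max_add_mul_min {m p : ℝ} (hmp : m ≤ p) (z : ℝ) :
    p * z ≤ p * max z 0 + m * min z 0 := by
  rcases le_total 0 z with hz | hz
  · simp [max_eq_left hz, min_eq_right hz]
  · rw [max_eq_right hz, min_eq_left hz]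
    nlinarith

section Profit

variable {πw πp πm π0 αr αh ηh : ℝ} {C : ℝ → ℝ} {wh wr g : ℝ}

lemma epay_ge_import (hπ : πm ≤ πp) :
    πp * netz αr ηh wh wr g + π0 ≤ epay πp πm π0 αr ηh wh wr g := by
  unfold epay
  linarith [mul_le_mul_max_add_mul_min hπ (netz αr ηh wh wr g)]

lemma epay_eq_import_of_netz_nonneg (hz : 0 ≤ netz αr ηh wh wr g) :
    epay πp πm π0 αr ηh wh wr g = πp * netz αr ηh wh wr g + π0 := by
  simp [epay, max_eq_left hz, min_eq_right hz]

lemma import_profit_eq :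
    πw * (wh + wr) - (πp * netz αr ηh wh wr g + π0) - C (wh / αh) =
      ((πw + πp / ηh) * wh - C (wh / αh)) + (πw - πp / αr) * wr + πp * g - π0 := by
  unfold netz
  ring

lemma profit_le_import (hπ : πm ≤ πp) :
    profit πw πp πm π0 αr αh ηh C wh wr g ≤
      ((πw + πp / ηh) * wh - C (wh / αh)) + (πw - πp / αr) * wr + πp * g - π0 := by
  rw [← import_profit_eq, profit]
  gcongr
  exact epay_ge_import hπ

lemma profit_eq_import_of_netz_nonneg (hz : 0 ≤ netz αr ηh wh wr g) :
    profit πw πp πm π0 αr αh ηh C wh wr g =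
      ((πw + πp / ηh) * wh - C (wh / αh)) + (πw - πp / αr) * wr + πp * g - π0 := by
  rw [← import_profit_eq, profit, epay_eq_import_of_netz_nonneg hz]

end Profit

lemma Pstar_eq_of_lt_import_threshold {πw πp πm π0 αr αh ηh : ℝ} {C : ℝ → ℝ}
    {wlh wuh wlr wur W g : ℝ} (hπ : πm ≤ πp) (hαr : 0 < αr) (hwrb : wlr ≤ wur)
    (hmid : αr * πw ≤ πp) (hW : W ∈ Icc wlh wuh)
    (hWmax : ∀ w ∈ Icc wlh wuh,
      (πw + πp / ηh) * w - C (w / αh) ≤ (πw + πp / ηh) * W - C (W / αh))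
    (hg : g < wlr / αr - W / ηh) :
    Pstar πw πp πm π0 αr αh ηh C wlh wuh wlr wur g =
      ((πw + πp / ηh) * W - C (W / αh)) + (πw - πp / αr) * wlr + πp * g - π0 := by
  have hslope : πw - πp / αr ≤ 0 := by
    rw [sub_nonpos, le_div_iff₀ hαr]
    linarith
  refine IsGreatest.csSup_eq ⟨⟨(W, wlr), ⟨hW, left_mem_Icc.2 hwrb⟩, ?_⟩, ?_⟩
  · exact profit_eq_import_of_netz_nonneg (by unfold netz; linarith)
  · rintro _ ⟨⟨wh, wr⟩, ⟨hwh, hwr, -⟩, rfl⟩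
    refine (profit_le_import hπ).trans ?_
    linarith [hWmax wh hwh, mul_le_mul_of_nonpos_left hwr hslope]

theorem value_slope_IM_general
    (πp πm π0 πw αh ηh αr wlh wuh wlr wur : ℝ) (C : ℝ → ℝ)
    (hπ : πm ≤ πp)
    (hαr : 0 < αr)
    (hwrb : wlr ≤ wur)
    (Wfun : ℝ → ℝ)
    (hWfun : ∀ δ : ℝ, Wfun δ ∈ Icc wlh wuh ∧
      ∀ w ∈ Icc wlh wuh,
        (πw + δ / ηh) * w - C (w / αh) ≤ (πw + δ / ηh) * Wfun δ - C (Wfun δ / αh))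
    (hmid2 : αr * πw ≤ πp) :
    ∀ g₁ g₂ : ℝ, g₁ ≤ g₂ → g₂ < wlr / αr - Wfun πp / ηh →
      Pstar πw πp πm π0 αr αh ηh C wlh wuh wlr wur g₂ -
        Pstar πw πp πm π0 αr αh ηh C wlh wuh wlr wur g₁ = πp * (g₂ - g₁) := by
  intro g₁ g₂ hle hIM
  obtain ⟨hW, hWmax⟩ := hWfun πp
  rw [Pstar_eq_of_lt_import_threshold hπ hαr hwrb hmid2 hW hWmax hIM,
    Pstar_eq_of_lt_import_threshold hπ hαr hwrb hmid2 hW hWmax (hle.trans_lt hIM)]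
  ring

/-- in the import region, the value function grows at rate π⁺. -/
theorem value_slope_IM
    (πp πm π0 πw αh ηh αr wlh wuh wlr wur : ℝ) (C : ℝ → ℝ)
    (hπ : πm ≤ πp) (hπm : 0 ≤ πm) (hπw : 0 ≤ πw)
    (hαh : 0 < αh) (hηh : 0 < ηh) (hαr : 0 < αr)
    (hwlh : 0 ≤ wlh) (hwhb : wlh ≤ wuh) (hwlr : 0 ≤ wlr) (hwrb : wlr ≤ wur)
    (hC : StrictConvexOn ℝ univ C) (hCd : Differentiable ℝ C) (hCm : Monotone C)
    (Wfun : ℝ → ℝ)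
    (hWfun : ∀ δ : ℝ, Wfun δ ∈ Icc wlh wuh ∧
      ∀ w ∈ Icc wlh wuh,
        (πw + δ / ηh) * w - C (w / αh) ≤ (πw + δ / ηh) * Wfun δ - C (Wfun δ / αh))
    (hmid1 : πm ≤ αr * πw) (hmid2 : αr * πw ≤ πp) :
    ∀ g₁ g₂ : ℝ, g₁ ≤ g₂ → g₂ < wlr / αr - Wfun πp / ηh →
      Pstar πw πp πm π0 αr αh ηh C wlh wuh wlr wur g₂ -
        Pstar πw πp πm π0 αr αh ηh C wlh wuh wlr wur g₁ = πp * (g₂ - g₁) :=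
  value_slope_IM_general πp πm π0 πw αh ηh αr wlh wuh wlr wur C hπ hαr hwrb Wfun hWfun hmid2
end
end

section
/- Assume π⁻ ≤ α_r·πʷ ≤ π⁺. For all g₁, g₂ with Γ_EX < g₁ ≤ g₂, the value function satisfies Π*(g₂) − Π*(g₁) = π⁻·(g₂ − g₁); in particular the maximum profit increases with renewable generation at rate π⁻ in the export region. -/
/-!
Since `π⁻ ≤ π⁺`, pricing all net exchange at the export price `π⁻` only overestimates profit, and
the resulting export profit separates into a term in `w_h` (maximised by `W(π⁻)`), a term in `w_r`
with slope `πʷ - π⁻/α_r ≥ 0` (maximised at `w̄_r`), and the term `π⁻·g`. For `g ≥ Γ_EX` the point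
`(W(π⁻), w̄_r)` exports, so there the bound is attained and `Π*(g)` is affine in `g` with slope `π⁻`.
-/

open Set

noncomputable section

/-- `profit πw πm πm …` (all net exchange priced at `π⁻`), regrouped by decision variable. -/
def exportProfit (πw πm π0 αr αh ηh : ℝ) (C : ℝ → ℝ) (wh wr g : ℝ) : ℝ :=
  ((πw + πm / ηh) * wh - C (wh / αh)) + (πw - πm / αr) * wr + πm * g - π0

section

variable {πw πp πm π0 αr αh ηh : ℝ} {C : ℝ → ℝ} {wh wr g : ℝ}

lemma epay_ge_of_le (hπ : πm ≤ πp) :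
    πm * netz αr ηh wh wr g + π0 ≤ epay πp πm π0 αr ηh wh wr g := by
  calc πm * netz αr ηh wh wr g + π0
      = πm * max (netz αr ηh wh wr g) 0 + πm * min (netz αr ηh wh wr g) 0 + π0 := by
        rw [← mul_add, max_add_min, add_zero]
    _ ≤ epay πp πm π0 αr ηh wh wr g := by
        rw [epay]
        gcongr

lemma epay_of_netz_nonpos (hz : netz αr ηh wh wr g ≤ 0) :
    epay πp πm π0 αr ηh wh wr g = πm * netz αr ηh wh wr g + π0 := by
  rw [epay, max_eq_right hz, min_eq_left hz]
  ring

lemma profit_le_exportProfit (hπ : πm ≤ πp) :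
    profit πw πp πm π0 αr αh ηh C wh wr g ≤ exportProfit πw πm π0 αr αh ηh C wh wr g := by
  have hpay : πm * netz αr ηh wh wr g + π0 ≤ epay πp πm π0 αr ηh wh wr g := epay_ge_of_le hπ
  rw [netz] at hpay
  rw [profit, exportProfit]
  linear_combination hpay

lemma profit_eq_exportProfit_of_netz_nonpos (hz : netz αr ηh wh wr g ≤ 0) :
    profit πw πp πm π0 αr αh ηh C wh wr g = exportProfit πw πm π0 αr αh ηh C wh wr g := by
  rw [profit, exportProfit, epay_of_netz_nonpos hz, netz]
  ring

lemma exportProfit_le_of_isOptimal {wlh wuh wur Wm : ℝ} (hαr : 0 < αr) (hmid : πm ≤ αr * πw)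
    (hWopt : ∀ w ∈ Icc wlh wuh,
      (πw + πm / ηh) * w - C (w / αh) ≤ (πw + πm / ηh) * Wm - C (Wm / αh))
    (hwh : wh ∈ Icc wlh wuh) (hwr : wr ≤ wur) :
    exportProfit πw πm π0 αr αh ηh C wh wr g ≤ exportProfit πw πm π0 αr αh ηh C Wm wur g := by
  have hslope : 0 ≤ πw - πm / αr := by
    rw [sub_nonneg, div_le_iff₀ hαr, mul_comm]
    exact hmid
  have hthermal := hWopt wh hwh
  have hreverse := mul_le_mul_of_nonneg_left hwr hslope
  rw [exportProfit, exportProfit]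
  linarith

end

lemma Pstar_eq_exportProfit {πp πm π0 πw αh ηh αr wlh wuh wlr wur Wm g : ℝ} {C : ℝ → ℝ}
    (hπ : πm ≤ πp) (hαr : 0 < αr) (hwrb : wlr ≤ wur) (hmid : πm ≤ αr * πw)
    (hWmem : Wm ∈ Icc wlh wuh)
    (hWopt : ∀ w ∈ Icc wlh wuh,
      (πw + πm / ηh) * w - C (w / αh) ≤ (πw + πm / ηh) * Wm - C (Wm / αh))
    (hg : wur / αr - Wm / ηh ≤ g) :
    Pstar πw πp πm π0 αr αh ηh C wlh wuh wlr wur g =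
      exportProfit πw πm π0 αr αh ηh C Wm wur g := by
  have hexport : netz αr ηh Wm wur g ≤ 0 := by
    rw [netz]
    linarith
  refine IsGreatest.csSup_eq ⟨⟨(Wm, wur), ⟨hWmem, hwrb, le_rfl⟩, ?_⟩, ?_⟩
  · exact profit_eq_exportProfit_of_netz_nonpos hexport
  · rintro _ ⟨⟨wh, wr⟩, ⟨hwh, hwr⟩, rfl⟩
    exact (profit_le_exportProfit hπ).trans
      (exportProfit_le_of_isOptimal hαr hmid hWopt hwh hwr.2)

theorem value_slope_EX_general
    (πp πm π0 πw αh ηh αr wlh wuh wlr wur : ℝ) (C : ℝ → ℝ)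
    (hπ : πm ≤ πp)
    (hαr : 0 < αr)
    (hwrb : wlr ≤ wur)
    (Wfun : ℝ → ℝ)
    (hWfun : ∀ δ : ℝ, Wfun δ ∈ Icc wlh wuh ∧
      ∀ w ∈ Icc wlh wuh,
        (πw + δ / ηh) * w - C (w / αh) ≤ (πw + δ / ηh) * Wfun δ - C (Wfun δ / αh))
    (hmid1 : πm ≤ αr * πw) :
    ∀ g₁ g₂ : ℝ, wur / αr - Wfun πm / ηh < g₁ → g₁ ≤ g₂ →
      Pstar πw πp πm π0 αr αh ηh C wlh wuh wlr wur g₂ -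
        Pstar πw πp πm π0 αr αh ηh C wlh wuh wlr wur g₁ = πm * (g₂ - g₁) := by
  intro g₁ g₂ hg₁ hg₁₂
  obtain ⟨hWmem, hWopt⟩ := hWfun πm
  rw [Pstar_eq_exportProfit hπ hαr hwrb hmid1 hWmem hWopt (hg₁.le.trans hg₁₂),
    Pstar_eq_exportProfit hπ hαr hwrb hmid1 hWmem hWopt hg₁.le, exportProfit, exportProfit]
  ring

/-- in the export region, the value function grows at rate π⁻. -/
theorem value_slope_EX
    (πp πm π0 πw αh ηh αr wlh wuh wlr wur : ℝ) (C : ℝ → ℝ)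
    (hπ : πm ≤ πp) (hπm : 0 ≤ πm) (hπw : 0 ≤ πw)
    (hαh : 0 < αh) (hηh : 0 < ηh) (hαr : 0 < αr)
    (hwlh : 0 ≤ wlh) (hwhb : wlh ≤ wuh) (hwlr : 0 ≤ wlr) (hwrb : wlr ≤ wur)
    (hC : StrictConvexOn ℝ univ C) (hCd : Differentiable ℝ C) (hCm : Monotone C)
    (Wfun : ℝ → ℝ)
    (hWfun : ∀ δ : ℝ, Wfun δ ∈ Icc wlh wuh ∧
      ∀ w ∈ Icc wlh wuh,
        (πw + δ / ηh) * w - C (w / αh) ≤ (πw + δ / ηh) * Wfun δ - C (Wfun δ / αh))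
    (hmid1 : πm ≤ αr * πw) (hmid2 : αr * πw ≤ πp) :
    ∀ g₁ g₂ : ℝ, wur / αr - Wfun πm / ηh < g₁ → g₁ ≤ g₂ →
      Pstar πw πp πm π0 αr αh ηh C wlh wuh wlr wur g₂ -
        Pstar πw πp πm π0 αr αh ηh C wlh wuh wlr wur g₁ = πm * (g₂ - g₁) :=
  value_slope_EX_general πp πm π0 πw αh ηh αr wlh wuh wlr wur C hπ hαr hwrb Wfun hWfun hmid1
end
end
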